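/- arXiv:2112.15534 — 2 statements merged into one kernel-verified Lean document; each statement's English description precedes it below -/
import Mathlib

section
/- Let F be a distribution function and let p ∈ {1 − F(x) : x ∈ ℝ} with p ∈ (0,1). Then for all integers k,n ≥ 1, the probability of being a maximum when the coordinates have a Bernoulli(p) distribution is at most the probability of being a maximum when the coordinates have distribution F; that is, p_{k,n}^{(p)} ≤ p_{k,n}^{(F)}. -/
/-!
Thresholding every coordinate at a point `x` with `1 - F(x) = p`, i.e. replacing `X i j` by
`𝟙{x < X i j}`, turns the `F`-array into an i.i.d. Bernoulli(p) array, and since the threshold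
map is monotone, a maximum of the thresholded sample is a maximum of the original one. The
probability of being a maximum only depends on the joint law of the array, which for independent
arrays is the product of the marginals, so the thresholded array has exactly the Bernoulli
probability `p_{k,n}^{(p)}`.
-/

open MeasureTheory ProbabilityTheory Filter

/-- `X i` is a (strong) maximum, with respect to the coordinatewise product order, among
the sample `X 0, …, X (n-1)` of vectors of dimension `k`. -/
def IsParetoMax {Ω : Type*} (X : ℕ → ℕ → Ω → ℝ) (k n i : ℕ) (ω : Ω) : Prop :=
  ∀ j < n, j ≠ i → ¬ (∀ m < k, X i m ω ≤ X j m ω)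

lemma IsParetoMax.of_comp_monotone {Ω : Type*} {X : ℕ → ℕ → Ω → ℝ} {φ : ℝ → ℝ} (hφ : Monotone φ)
    {k n i : ℕ} {ω : Ω} (h : IsParetoMax (fun i j ω => φ (X i j ω)) k n i ω) :
    IsParetoMax X k n i ω :=
  fun j hj hji hle => h j hj hji fun m hm => hφ (hle m hm)

section

variable {Ω Ω' : Type*} [MeasurableSpace Ω] [MeasurableSpace Ω'] {P : Measure Ω} {P' : Measure Ω'}

lemma measurableSet_isParetoMax (k n i : ℕ) :
    MeasurableSet {v : ℕ × ℕ → ℝ | IsParetoMax (fun i j v => v (i, j)) k n i v} := by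
  simp only [IsParetoMax]
  measurability

lemma iIndepFun.map_fun_eq_of_map_eq {ι β : Type*} [MeasurableSpace β]
    [IsProbabilityMeasure P] [IsProbabilityMeasure P'] {f : ι → Ω → β} {g : ι → Ω' → β}
    (hf : ∀ i, Measurable (f i)) (hg : ∀ i, Measurable (g i))
    (hfi : iIndepFun f P) (hgi : iIndepFun g P') (h : ∀ i, P.map (f i) = P'.map (g i)) :
    P.map (fun ω i => f i ω) = P'.map (fun ω i => g i ω) := by
  rw [hfi.map_fun_eq_infinitePi_map hf, hgi.map_fun_eq_infinitePi_map hg, funext h]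

lemma measure_isParetoMax_eq_of_map_eq [IsProbabilityMeasure P] [IsProbabilityMeasure P']
    {X : ℕ → ℕ → Ω → ℝ} {Y : ℕ → ℕ → Ω' → ℝ}
    (hX : ∀ i j, Measurable (X i j)) (hY : ∀ i j, Measurable (Y i j))
    (hXi : iIndepFun (fun q : ℕ × ℕ => X q.1 q.2) P)
    (hYi : iIndepFun (fun q : ℕ × ℕ => Y q.1 q.2) P')
    (hlaw : ∀ i j, P.map (X i j) = P'.map (Y i j)) (k n i : ℕ) :
    P {ω | IsParetoMax X k n i ω} = P' {ω | IsParetoMax Y k n i ω} := by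
  have hjoint := iIndepFun.map_fun_eq_of_map_eq (fun q : ℕ × ℕ => hX q.1 q.2)
    (fun q : ℕ × ℕ => hY q.1 q.2) hXi hYi fun q : ℕ × ℕ => hlaw q.1 q.2
  have hA := measurableSet_isParetoMax k n i
  calc P {ω | IsParetoMax X k n i ω}
      = P.map (fun ω (q : ℕ × ℕ) => X q.1 q.2 ω) _ :=
        (Measure.map_apply (measurable_pi_lambda _ fun q => hX q.1 q.2) hA).symm
    _ = P'.map (fun ω (q : ℕ × ℕ) => Y q.1 q.2 ω) _ := by rw [hjoint]
    _ = P' {ω | IsParetoMax Y k n i ω} :=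
        Measure.map_apply (measurable_pi_lambda _ fun q => hY q.1 q.2) hA

lemma measurable_decide_eq_one {W : Ω → ℝ} (hW : Measurable W) :
    Measurable fun ω => decide (W ω = 1) :=
  measurable_to_bool (by simpa [Set.preimage] using hW (measurableSet_singleton 1))

lemma map_decide_eq_one {W : Ω → ℝ} [IsProbabilityMeasure P] (hW : Measurable W) :
    P.map (fun ω => decide (W ω = 1)) =
      P {ω | W ω = 1} • Measure.dirac true + (1 - P {ω | W ω = 1}) • Measure.dirac false := by
  have hW1 : MeasurableSet {ω | W ω = 1} := hW (measurableSet_singleton 1)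
  refine Measure.ext_of_singleton fun b => ?_
  rw [Measure.map_apply (measurable_decide_eq_one hW) (measurableSet_singleton b)]
  cases b
  · simp [Set.preimage, ← prob_compl_eq_one_sub hW1, Set.compl_def]
  · simp [Set.preimage]

lemma map_eq_map_decide_eq_one {W : Ω → ℝ} (hW : Measurable W) (hW01 : ∀ ω, W ω = 0 ∨ W ω = 1) :
    P.map W = (P.map fun ω => decide (W ω = 1)).map fun b => if b then 1 else 0 := by
  rw [Measure.map_map Measurable.of_discrete (measurable_decide_eq_one hW)]
  congr 1
  funext ω
  rcases hW01 ω with h | h <;> simp [h]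

lemma map_eq_map_of_eq_zero_or_one [IsProbabilityMeasure P] [IsProbabilityMeasure P']
    {W : Ω → ℝ} {V : Ω' → ℝ} (hW : Measurable W) (hV : Measurable V)
    (hW01 : ∀ ω, W ω = 0 ∨ W ω = 1) (hV01 : ∀ ω, V ω = 0 ∨ V ω = 1)
    (h : P {ω | W ω = 1} = P' {ω | V ω = 1}) :
    P.map W = P'.map V := by
  rw [map_eq_map_decide_eq_one hW hW01, map_eq_map_decide_eq_one hV hV01,
    map_decide_eq_one hW, map_decide_eq_one hV, h]

end

theorem stmt_5_general {Ω₁ Ω₂ : Type*} [MeasurableSpace Ω₁] [MeasurableSpace Ω₂]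
    (P₁ : Measure Ω₁) [IsProbabilityMeasure P₁] (P₂ : Measure Ω₂) [IsProbabilityMeasure P₂]
    (X : ℕ → ℕ → Ω₁ → ℝ) (Y : ℕ → ℕ → Ω₂ → ℝ) (p : ℝ)
    (hXmeas : ∀ i j, Measurable (X i j))
    (hXindep : iIndepFun (fun q : ℕ × ℕ => X q.1 q.2) P₁)
    (hXident : ∀ i j, IdentDistrib (X i j) (X 0 0) P₁ P₁)
    (hYmeas : ∀ i j, Measurable (Y i j))
    (hYindep : iIndepFun (fun q : ℕ × ℕ => Y q.1 q.2) P₂)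
    (hYval : ∀ i j ω, Y i j ω = 0 ∨ Y i j ω = 1)
    (hYp : ∀ i j, P₂ {ω | Y i j ω = 1} = ENNReal.ofReal p)
    (hpF : ∃ x : ℝ, P₁ {ω | x < X 0 0 ω} = ENNReal.ofReal p)
    (k n : ℕ) :
    P₂ {ω | IsParetoMax Y k n 0 ω} ≤ P₁ {ω | IsParetoMax X k n 0 ω} := by
  obtain ⟨x, hx⟩ := hpF
  set φ : ℝ → ℝ := fun t => if x < t then 1 else 0
  have hφ : Monotone φ := fun s t hst => by grind
  have hφmeas : Measurable φ := Measurable.ite measurableSet_Ioi measurable_const measurable_const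
  have hlaw : ∀ i j, P₁.map (fun ω => φ (X i j ω)) = P₂.map (Y i j) := fun i j =>
    map_eq_map_of_eq_zero_or_one (hφmeas.comp (hXmeas i j)) (hYmeas i j)
      (fun ω => by by_cases h : x < X i j ω <;> simp [φ, h]) (hYval i j) (by
        have hthreshold : {ω | φ (X i j ω) = 1} = X i j ⁻¹' Set.Ioi x := by ext ω; simp [φ]
        rw [hthreshold, (hXident i j).measure_mem_eq measurableSet_Ioi, hYp]
        exact hx)
  calc P₂ {ω | IsParetoMax Y k n 0 ω}
      = P₁ {ω | IsParetoMax (fun i j ω => φ (X i j ω)) k n 0 ω} :=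
        (measure_isParetoMax_eq_of_map_eq (fun i j => hφmeas.comp (hXmeas i j)) hYmeas
          (hXindep.comp _ fun _ => hφmeas) hYindep hlaw k n 0).symm
    _ ≤ P₁ {ω | IsParetoMax X k n 0 ω} :=
        measure_mono fun ω => IsParetoMax.of_comp_monotone hφ

/-- if `p = 1 - F(x)` for some `x ∈ ℝ` and `p ∈ (0,1)`, then the probability of
being a maximum for iid Bernoulli(p) coordinates (array `Y`) is at most the probability of
being a maximum for iid coordinates with distribution `F` (array `X`). -/
theorem stmt_5 {Ω₁ Ω₂ : Type*} [MeasurableSpace Ω₁] [MeasurableSpace Ω₂]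
    (P₁ : Measure Ω₁) [IsProbabilityMeasure P₁] (P₂ : Measure Ω₂) [IsProbabilityMeasure P₂]
    (X : ℕ → ℕ → Ω₁ → ℝ) (Y : ℕ → ℕ → Ω₂ → ℝ) (p : ℝ) (hp : p ∈ Set.Ioo (0 : ℝ) 1)
    (hXmeas : ∀ i j, Measurable (X i j))
    (hXindep : iIndepFun (fun q : ℕ × ℕ => X q.1 q.2) P₁)
    (hXident : ∀ i j, IdentDistrib (X i j) (X 0 0) P₁ P₁)
    (hYmeas : ∀ i j, Measurable (Y i j))
    (hYindep : iIndepFun (fun q : ℕ × ℕ => Y q.1 q.2) P₂)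
    (hYval : ∀ i j ω, Y i j ω = 0 ∨ Y i j ω = 1)
    (hYp : ∀ i j, P₂ {ω | Y i j ω = 1} = ENNReal.ofReal p)
    (hpF : ∃ x : ℝ, P₁ {ω | x < X 0 0 ω} = ENNReal.ofReal p)
    (k n : ℕ) (hk : 1 ≤ k) (hn : 1 ≤ n) :
    P₂ {ω | IsParetoMax Y k n 0 ω} ≤ P₁ {ω | IsParetoMax X k n 0 ω} :=
  stmt_5_general P₁ P₂ X Y p hXmeas hXindep hXident hYmeas hYindep hYval hYp hpF k n
end

section
/- Let the coordinates be i.i.d. Bernoulli(p) random variables for some p ∈ (0,1) and let k ≥ 1 be fixed. Then p_{k,n}^{(p)} ~ p^k (1 − p^k)^{n−1} as n → ∞, i.e. the ratio p_{k,n}^{(p)} / [p^k (1 − p^k)^{n−1}] converges to 1 as n → ∞. -/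
/-!
Condition on the set `T ⊆ {0, …, k-1}` of coordinates where the first row equals `1`. Since all
entries are `0` or `1`, a row `j` dominates the first row iff it equals `1` on all of `T`, so by
independence of the rows
`p_{k,n} = ∑_T p^|T| (1-p)^(k-|T|) (1-p^|T|)^(n-1)`.
The term `T = {0, …, k-1}` is `p^k (1-p^k)^(n-1)`, and every other term is smaller by a factor
`((1-p^|T|)/(1-p^k))^(n-1) → 0`, because `|T| < k` forces `1 - p^|T| < 1 - p^k`.
-/

open MeasureTheory ProbabilityTheory Filter

open Finset

namespace ProbabilityTheory

variable {Ω ι κ β : Type*} {mΩ : MeasurableSpace Ω} {P : Measure Ω} [MeasurableSpace β]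

theorem iIndepFun.curry [IsProbabilityMeasure P] {X : ι → κ → Ω → β}
    (hX : ∀ i j, Measurable (X i j)) (h : iIndepFun (fun q : ι × κ => X q.1 q.2) P) :
    iIndepFun (fun i ω j => X i j ω) P := by
  have _ i j := Measure.isProbabilityMeasure_map (μ := P) (hX i j).aemeasurable
  have hrow : ∀ i, P.map (fun ω j => X i j ω) = Measure.infinitePi (fun j => P.map (X i j)) :=
    fun i => (h.precomp (Prod.mk_right_injective i)).map_fun_eq_infinitePi_map (hX i)
  rw [iIndepFun_iff_map_fun_eq_infinitePi_map fun i => measurable_pi_lambda _ (hX i)]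
  have hcurry : (fun ω i j => X i j ω) =
      MeasurableEquiv.curry ι κ β ∘ fun ω (q : ι × κ) => X q.1 q.2 ω := rfl
  rw [hcurry, ← Measure.map_map (MeasurableEquiv.measurable _) (by fun_prop),
    h.map_fun_eq_infinitePi_map (X := fun q : ι × κ => X q.1 q.2) fun q => hX q.1 q.2,
    Measure.infinitePi_map_curry (fun i j => P.map (X i j))]
  simp_rw [hrow]

theorem iIndepFun.measure_forall_mem_iff [IsProbabilityMeasure P] {Y : ι → Ω → β}
    (h : iIndepFun Y P) (hY : ∀ i, Measurable (Y i)) {A : Set β} (hA : MeasurableSet A)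
    {q : ENNReal} (hq : ∀ i, P (Y i ⁻¹' A) = q) {S T : Finset ι} (hTS : T ⊆ S) :
    P {ω | ∀ i ∈ S, (i ∈ T ↔ Y i ω ∈ A)} = q ^ #T * (1 - q) ^ (#S - #T) := by
  classical
  have hset : {ω | ∀ i ∈ S, (i ∈ T ↔ Y i ω ∈ A)} =
      ⋂ i ∈ S, Y i ⁻¹' (if i ∈ T then A else Aᶜ) := by
    ext ω
    simp only [Set.mem_ofPred_eq, Set.mem_iInter, Set.mem_preimage]
    refine forall₂_congr fun i _ => ?_
    split_ifs with hi <;> simp [hi]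
  have hprob : ∀ i, P (Y i ⁻¹' (if i ∈ T then A else Aᶜ)) = if i ∈ T then q else 1 - q := by
    intro i
    split_ifs
    · exact hq i
    · rw [Set.preimage_compl, prob_compl_eq_one_sub (hY i hA), hq i]
  rw [hset, h.meas_biInter fun i _ => ⟨_, by split_ifs <;> simp [hA], rfl⟩]
  simp_rw [hprob]
  rw [prod_ite, prod_const, prod_const, filter_mem_eq_inter, inter_eq_right.2 hTS, filter_not,
    filter_mem_eq_inter, inter_eq_right.2 hTS, card_sdiff_of_subset hTS]

theorem iIndepFun.measure_head_mem_and_forall_tail_mem {γ : Type*} [MeasurableSpace γ]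
    {R : ℕ → Ω → γ} (h : iIndepFun R P) {B₀ B : Set γ} (hB₀ : MeasurableSet B₀)
    (hB : MeasurableSet B) {c : ENNReal} (hc : ∀ j, P (R j ⁻¹' B) = c) (N : ℕ) :
    P {ω | R 0 ω ∈ B₀ ∧ ∀ j ∈ Icc 1 N, R j ω ∈ B} = P (R 0 ⁻¹' B₀) * c ^ N := by
  have hset : {ω | R 0 ω ∈ B₀ ∧ ∀ j ∈ Icc 1 N, R j ω ∈ B} =
      ⋂ j ∈ range (N + 1), R j ⁻¹' (if j = 0 then B₀ else B) := by
    ext ω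
    simp only [Set.mem_ofPred_eq, Set.mem_iInter, Set.mem_preimage, mem_range, mem_Icc]
    refine ⟨fun ⟨h0, hj⟩ j hjN => ?_, fun hj => ⟨by simpa using hj 0 (by omega), fun j hj' => ?_⟩⟩
    · split_ifs with hj0
      · exact hj0 ▸ h0
      · exact hj j ⟨by omega, by omega⟩
    · simpa [show j ≠ 0 by omega] using hj j (by omega)
  rw [hset, h.meas_biInter fun j _ => ⟨_, by split_ifs <;> assumption, rfl⟩, prod_range_succ',
    mul_comm]
  simp [hc]

end ProbabilityTheory

theorem tendsto_sum_mul_pow_div_of_dominant {ι : Type*} (s : Finset ι) (a r : ι → ℝ) {i₀ : ι}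
    (hi₀ : i₀ ∈ s) (ha : a i₀ ≠ 0) (hr₀ : r i₀ ≠ 0) (hr : ∀ i ∈ s, i ≠ i₀ → |r i| < r i₀) :
    Tendsto (fun N : ℕ => (∑ i ∈ s, a i * r i ^ N) / (a i₀ * r i₀ ^ N)) atTop (nhds 1) := by
  classical
  have hterm : ∀ i ∈ s, Tendsto (fun N : ℕ => a i / a i₀ * (r i / r i₀) ^ N) atTop
      (nhds (if i = i₀ then 1 else 0)) := by
    intro i hi
    split_ifs with hii₀
    · subst hii₀
      simp [ha, hr₀]
    · have hpos : 0 < r i₀ := (abs_nonneg _).trans_lt (hr i hi hii₀)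
      have hratio : |r i / r i₀| < 1 := by
        rw [abs_div, abs_of_pos hpos, div_lt_one hpos]
        exact hr i hi hii₀
      simpa using (tendsto_pow_atTop_nhds_zero_of_abs_lt_one hratio).const_mul (a i / a i₀)
  have hsum := tendsto_finsetSum s hterm
  rw [sum_ite_eq' s i₀, if_pos hi₀] at hsum
  refine hsum.congr fun N => ?_
  rw [sum_div]
  refine sum_congr rfl fun i _ => ?_
  rw [div_pow]
  field_simp

theorem Finset.eq_of_forall_mem_iff_of_subset {α : Type*} {S T T' : Finset α} {q : α → Prop}
    (hT : T ⊆ S) (hT' : T' ⊆ S) (h : ∀ m ∈ S, (m ∈ T ↔ q m)) (h' : ∀ m ∈ S, (m ∈ T' ↔ q m)) :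
    T = T' := by
  ext m
  by_cases hm : m ∈ S
  · rw [h m hm, h' m hm]
  · exact iff_of_false (fun h => hm (hT h)) (fun h => hm (hT' h))

theorem le_iff_eq_one_imp_eq_one {a b : ℝ} (ha : a = 0 ∨ a = 1) (hb : b = 0 ∨ b = 1) :
    a ≤ b ↔ (a = 1 → b = 1) := by
  rcases ha with rfl | rfl <;> rcases hb with rfl | rfl <;> norm_num

section Pareto

variable {Ω : Type*} {X : ℕ → ℕ → Ω → ℝ} {k : ℕ} {T : Finset ℕ}

theorem isParetoMax_zero_succ_iff {ω : Ω} (hval : ∀ i m, X i m ω = 0 ∨ X i m ω = 1)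
    (hTk : T ⊆ range k) (hT : ∀ m ∈ range k, (m ∈ T ↔ X 0 m ω = 1)) (N : ℕ) :
    IsParetoMax X k (N + 1) 0 ω ↔ ∀ j ∈ Icc 1 N, ¬ ∀ m ∈ T, X j m ω = 1 := by
  have hdom : ∀ j, (∀ m < k, X 0 m ω ≤ X j m ω) ↔ ∀ m ∈ T, X j m ω = 1 := fun j => by
    simp only [le_iff_eq_one_imp_eq_one (hval 0 _) (hval j _)]
    exact ⟨fun h m hm => h m (mem_range.1 (hTk hm)) ((hT m (hTk hm)).1 hm),
      fun h m hm h1 => h m ((hT m (mem_range.2 hm)).2 h1)⟩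
  simp only [IsParetoMax, hdom, mem_Icc]
  exact ⟨fun h j hj => h j (by omega) (by omega), fun h j hj hj0 => h j ⟨by omega, by omega⟩⟩

theorem setOf_isParetoMax_zero_succ (hval : ∀ i m ω, X i m ω = 0 ∨ X i m ω = 1) (N : ℕ) :
    {ω | IsParetoMax X k (N + 1) 0 ω} = ⋃ T ∈ (range k).powerset,
      {ω | (∀ m ∈ range k, (m ∈ T ↔ X 0 m ω = 1)) ∧ ∀ j ∈ Icc 1 N, ¬ ∀ m ∈ T, X j m ω = 1} := by
  ext ω
  simp only [Set.mem_ofPred_eq, Set.mem_iUnion, mem_powerset, exists_prop]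
  constructor
  · intro h
    have hT : ∀ m ∈ range k, (m ∈ (range k).filter (X 0 · ω = 1) ↔ X 0 m ω = 1) :=
      fun m hm => by simp [mem_filter, hm]
    exact ⟨_, filter_subset _ _, hT,
      (isParetoMax_zero_succ_iff (hval · · ω) (filter_subset _ _) hT N).1 h⟩
  · rintro ⟨T, hTk, hT, hcov⟩
    exact (isParetoMax_zero_succ_iff (hval · · ω) hTk hT N).2 hcov

variable [MeasurableSpace Ω] {P : Measure Ω} [IsProbabilityMeasure P]

theorem measure_pattern_and_uncovered (hmeas : ∀ i j, Measurable (X i j))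
    (hindep : iIndepFun (fun q : ℕ × ℕ => X q.1 q.2) P) {q : ENNReal}
    (hq : ∀ i j, P {ω | X i j ω = 1} = q) (hTk : T ⊆ range k) (N : ℕ) :
    P {ω | (∀ m ∈ range k, (m ∈ T ↔ X 0 m ω = 1)) ∧ ∀ j ∈ Icc 1 N, ¬ ∀ m ∈ T, X j m ω = 1} =
      q ^ #T * (1 - q) ^ (k - #T) * (1 - q ^ #T) ^ N := by
  have hrow : ∀ j, iIndepFun (X j) P := fun j =>
    hindep.precomp (g := Prod.mk j) (Prod.mk_right_injective j)
  have hq' : ∀ j m, P (X j m ⁻¹' {1}) = q := hq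
  have hcover : ∀ j, P {ω | ¬ ∀ m ∈ T, X j m ω = 1} = 1 - q ^ #T := fun j => by
    have hall : {ω | ∀ m ∈ T, X j m ω = 1} = {ω | ∀ m ∈ T, (m ∈ T ↔ X j m ω ∈ ({1} : Set ℝ))} :=
      Set.ext fun ω => forall₂_congr fun m hm => (iff_true_left hm).symm
    rw [← Set.compl_ofPred, prob_compl_eq_one_sub (by measurability), hall,
      (hrow j).measure_forall_mem_iff (hmeas j) (measurableSet_singleton 1) (hq' j) subset_rfl,
      Nat.sub_self, pow_zero, mul_one]
  calc _ = P {ω | ∀ m ∈ range k, (m ∈ T ↔ X 0 m ω ∈ ({1} : Set ℝ))} * (1 - q ^ #T) ^ N :=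
        (hindep.curry hmeas).measure_head_mem_and_forall_tail_mem
          (B₀ := {x | ∀ m ∈ range k, (m ∈ T ↔ x m = 1)}) (B := {x | ¬ ∀ m ∈ T, x m = 1})
          (by measurability) (by measurability) hcover N
    _ = q ^ #T * (1 - q) ^ (k - #T) * (1 - q ^ #T) ^ N := by
      rw [(hrow 0).measure_forall_mem_iff (hmeas 0) (measurableSet_singleton 1) (hq' 0) hTk,
        card_range]

theorem measure_isParetoMax_zero_succ (hmeas : ∀ i j, Measurable (X i j))
    (hindep : iIndepFun (fun q : ℕ × ℕ => X q.1 q.2) P)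
    (hval : ∀ i j ω, X i j ω = 0 ∨ X i j ω = 1) {q : ENNReal}
    (hq : ∀ i j, P {ω | X i j ω = 1} = q) (N : ℕ) :
    P {ω | IsParetoMax X k (N + 1) 0 ω} =
      ∑ T ∈ (range k).powerset, q ^ #T * (1 - q) ^ (k - #T) * (1 - q ^ #T) ^ N := by
  rw [setOf_isParetoMax_zero_succ hval N, measure_biUnion_finset
    (fun T hT T' hT' hne => Set.disjoint_left.2 fun ω hω hω' =>
      hne (eq_of_forall_mem_iff_of_subset (mem_powerset.1 hT) (mem_powerset.1 hT') hω.1 hω'.1))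
    fun T _ => by measurability]
  exact sum_congr rfl fun T hT =>
    measure_pattern_and_uncovered hmeas hindep hq (mem_powerset.1 hT) N

end Pareto

/-- for iid Bernoulli(p) coordinates and fixed `k ≥ 1`,
`p_{k,n}^{(p)} / [p^k (1 - p^k)^{n-1}] → 1` as `n → ∞`. -/
theorem stmt_14 {Ω : Type*} [MeasurableSpace Ω] (P : Measure Ω) [IsProbabilityMeasure P]
    (p : ℝ) (hp : p ∈ Set.Ioo (0 : ℝ) 1)
    (X : ℕ → ℕ → Ω → ℝ)
    (hmeas : ∀ i j, Measurable (X i j))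
    (hindep : iIndepFun (fun q : ℕ × ℕ => X q.1 q.2) P)
    (hval : ∀ i j ω, X i j ω = 0 ∨ X i j ω = 1)
    (hp1 : ∀ i j, P {ω | X i j ω = 1} = ENNReal.ofReal p)
    (k : ℕ) (hk : 1 ≤ k) :
    Filter.Tendsto
      (fun n : ℕ =>
        (P {ω | IsParetoMax X k n 0 ω}).toReal / (p ^ k * (1 - p ^ k) ^ (n - 1)))
      Filter.atTop (nhds 1) := by
  obtain ⟨hp_pos, hp_lt_one⟩ := hp
  have hformula : ∀ N, (P {ω | IsParetoMax X k (N + 1) 0 ω}).toReal =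
      ∑ T ∈ (range k).powerset, p ^ #T * (1 - p) ^ (k - #T) * (1 - p ^ #T) ^ N := fun N => by
    rw [measure_isParetoMax_zero_succ hmeas hindep hval hp1 N, ENNReal.toReal_sum (by finiteness)]
    refine sum_congr rfl fun T _ => ?_
    simp [ENNReal.toReal_sub_of_le, hp_pos.le, hp_lt_one.le, pow_le_one₀]
  have hdom : ∀ T ∈ (range k).powerset, T ≠ range k → |1 - p ^ #T| < 1 - p ^ #(range k) := by
    intro T hT hne
    have hcard : #T < k :=
      card_range k ▸ card_lt_card (ssubset_of_subset_of_ne (mem_powerset.1 hT) hne)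
    rw [abs_of_nonneg (sub_nonneg.2 (pow_le_one₀ hp_pos.le hp_lt_one.le)), card_range]
    linarith [pow_lt_pow_right_of_lt_one₀ hp_pos hp_lt_one hcard]
  have hpk : 1 - p ^ #(range k) ≠ 0 := by
    simpa [sub_eq_zero] using (pow_lt_one₀ hp_pos.le hp_lt_one (by omega : k ≠ 0)).ne'
  refine (tendsto_add_atTop_iff_nat 1).1 ?_
  simp only [Nat.add_sub_cancel, hformula]
  convert tendsto_sum_mul_pow_div_of_dominant _ (fun T => p ^ #T * (1 - p) ^ (k - #T))
    (fun T => 1 - p ^ #T) (mem_powerset_self (range k)) (by simp [hp_pos.ne']) hpk hdom using 3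
  simp
end
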